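/- The metric ĝ = dr² + (r²/(1+r²))(dθ² + sin²θ dφ²) on (0,∞) × S² (the non-abelian T-dual of the round S³) has scalar curvature R = 2(r⁴ + 3r² + 9)/(1 + r²)², which is strictly positive for all r. -/

import Mathlib

open scoped BigOperators

noncomputable section

variable {ι : Type} [Fintype ι] [DecidableEq ι]

/-- Partial derivative of a function of coordinates in the `i`-th coordinate direction. -/
def pd (f : (ι → ℝ) → ℝ) (i : ι) (x : ι → ℝ) : ℝ :=
  fderiv ℝ f x (Pi.single i 1)

/-- Christoffel symbols `Γ^k_{ij}` of a coordinate metric `g`. -/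
def christoffel (g : (ι → ℝ) → Matrix ι ι ℝ) (k i j : ι) (x : ι → ℝ) : ℝ :=
  (1/2) * ∑ l, (g x)⁻¹ k l *
    (pd (fun y => g y l j) i x + pd (fun y => g y i l) j x - pd (fun y => g y i j) l x)

/-- Ricci curvature tensor `R_{ij}` of a coordinate metric `g`. -/
def ricci (g : (ι → ℝ) → Matrix ι ι ℝ) (i j : ι) (x : ι → ℝ) : ℝ :=
  (∑ k, pd (christoffel g k i j) k x)
  - (∑ k, pd (christoffel g k k j) i x)
  + (∑ k, ∑ l, christoffel g k k l x * christoffel g l i j x)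
  - (∑ k, ∑ l, christoffel g k i l x * christoffel g l k j x)

/-- Scalar curvature `R = g^{ij} R_{ij}` of a coordinate metric `g`. -/
def scalarCurvature (g : (ι → ℝ) → Matrix ι ι ℝ) (x : ι → ℝ) : ℝ :=
  ∑ i, ∑ j, (g x)⁻¹ i j * ricci g i j x

end

/-- The non-abelian T-dual of the round `S³`, in polar coordinates `x = (r, θ, φ)` on
`su(2)* ≅ ℝ³`:  `ĝ = dr² + (r²/(1+r²))(dθ² + sin²θ dφ²)`. -/
noncomputable def natdS3 : (Fin 3 → ℝ) → Matrix (Fin 3) (Fin 3) ℝ :=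
  fun x => Matrix.diagonal
    ![1, x 0 ^ 2 / (1 + x 0 ^ 2), x 0 ^ 2 / (1 + x 0 ^ 2) * Real.sin (x 1) ^ 2]


/-!
In polar coordinates `(r, θ, φ)` the dual metric is `dr² + F(r) g_{S²}` with
`F(r) = r²/(1+r²)`. For any warping function `F` the metric is diagonal, so its Christoffel
symbols are read off from the first derivatives of its coefficients, and the Ricci tensor is
again diagonal, with `R_rr = -F''/F + F'²/(2F²)`, `R_θθ = 1 - F''/2` and
`R_φφ = sin²θ (1 - F''/2)`. Tracing gives `R = 2/F - 2F''/F + F'²/(2F²)`, which for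
`F = r²/(1+r²)` is `2(r⁴ + 3r² + 9)/(1 + r²)²`.
-/

open Filter Topology Matrix Real

theorem HasDerivAt.hasFDerivAt_comp_apply {ι : Type} [Fintype ι] {u : ℝ → ℝ} {u' : ℝ}
    {x : ι → ℝ} {i : ι} (hu : HasDerivAt u u' (x i)) :
    HasFDerivAt (fun y : ι → ℝ => u (y i))
      (u' • ContinuousLinearMap.proj (R := ℝ) (φ := fun _ : ι => ℝ) i) x :=
  hu.comp_hasFDerivAt x (hasFDerivAt_apply i x)

section CoordinateCalculus

variable {ι : Type} [DecidableEq ι]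

theorem pd_const (c : ℝ) (i : ι) (x : ι → ℝ) : pd (fun _ => c) i x = 0 := by
  simp [pd]

theorem Filter.EventuallyEq.pd_eq {f g : (ι → ℝ) → ℝ} {x : ι → ℝ} (h : f =ᶠ[𝓝 x] g) (i : ι) :
    pd f i x = pd g i x := by
  rw [pd, pd, h.fderiv_eq]

theorem pd_ite_zero (p : Prop) [Decidable p] (f : (ι → ℝ) → ℝ) (i : ι) (x : ι → ℝ) :
    pd (fun y => if p then f y else 0) i x = if p then pd f i x else 0 := by
  by_cases hp : p <;> simp [hp, pd_const]

variable [Fintype ι]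

theorem pd_comp_apply {u : ℝ → ℝ} {u' : ℝ} {x : ι → ℝ} {i : ι} (hu : HasDerivAt u u' (x i))
    (j : ι) : pd (fun y => u (y i)) j x = if j = i then u' else 0 := by
  rw [pd, hu.hasFDerivAt_comp_apply.fderiv]
  simp [Pi.single_apply, eq_comm]

theorem pd_mul {f g : (ι → ℝ) → ℝ} {x : ι → ℝ} (hf : DifferentiableAt ℝ f x)
    (hg : DifferentiableAt ℝ g x) (i : ι) :
    pd (fun y => f y * g y) i x = pd f i x * g x + f x * pd g i x := by
  rw [pd, pd, pd, fderiv_fun_mul hf hg]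
  simp only [_root_.add_apply, _root_.smul_apply, smul_eq_mul]
  ring

theorem Matrix.inv_diagonal_of_ne_zero {K : Type*} [Field K] {v : ι → K} (hv : ∀ i, v i ≠ 0) :
    (diagonal v)⁻¹ = diagonal v⁻¹ := by
  refine inv_eq_right_inv ?_
  rw [diagonal_mul_diagonal, ← diagonal_one]
  congr 1
  funext i
  simp [hv i]

theorem christoffel_diagonal {g : (ι → ℝ) → Matrix ι ι ℝ} {h : (ι → ℝ) → ι → ℝ}
    (hg : ∀ y, g y = diagonal (h y)) {x : ι → ℝ} (hx : ∀ k, h x k ≠ 0) (k i j : ι) :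
    christoffel g k i j x = (h x k)⁻¹ / 2 *
      ((if k = j then pd (fun y => h y k) i x else 0)
        + (if i = k then pd (fun y => h y i) j x else 0)
        - (if i = j then pd (fun y => h y i) k x else 0)) := by
  obtain rfl : g = fun y => diagonal (h y) := funext hg
  simp only [christoffel, inv_diagonal_of_ne_zero hx, diagonal_apply, pd_ite_zero]
  simp only [ite_mul, zero_mul, Finset.sum_ite_eq, Finset.mem_univ, if_true, Pi.inv_apply]
  ring

theorem scalarCurvature_diagonal {g : (ι → ℝ) → Matrix ι ι ℝ} {h : (ι → ℝ) → ι → ℝ}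
    (hg : ∀ y, g y = diagonal (h y)) {x : ι → ℝ} (hx : ∀ k, h x k ≠ 0) :
    scalarCurvature g x = ∑ i, ricci g i i x / h x i := by
  simp only [scalarCurvature, hg x, inv_diagonal_of_ne_zero hx, diagonal_apply, ite_mul,
    zero_mul, Finset.sum_ite_eq, Finset.mem_univ, if_true, Pi.inv_apply]
  exact Finset.sum_congr rfl fun i _ => inv_mul_eq_div _ _

end CoordinateCalculus

theorem Real.hasDerivAt_sin_sq (t : ℝ) :
    HasDerivAt (fun t => sin t ^ 2) (2 * sin t * cos t) t := by
  simpa using (hasDerivAt_sin t).fun_pow 2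

noncomputable def warpedSphereCoeff (F : ℝ → ℝ) (x : Fin 3 → ℝ) : Fin 3 → ℝ :=
  ![1, F (x 0), F (x 0) * sin (x 1) ^ 2]

noncomputable def warpedSphereMetric (F : ℝ → ℝ) (x : Fin 3 → ℝ) : Matrix (Fin 3) (Fin 3) ℝ :=
  diagonal (warpedSphereCoeff F x)

noncomputable def warpedSphereChristoffel (F F' : ℝ → ℝ) :
    Fin 3 → Fin 3 → Fin 3 → (Fin 3 → ℝ) → ℝ
  | 0, 1, 1 => fun y => -F' (y 0) / 2
  | 0, 2, 2 => fun y => -F' (y 0) / 2 * sin (y 1) ^ 2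
  | 1, 0, 1 | 1, 1, 0 | 2, 0, 2 | 2, 2, 0 => fun y => F' (y 0) / (2 * F (y 0))
  | 1, 2, 2 => fun y => -(sin (y 1) * cos (y 1))
  | 2, 1, 2 | 2, 2, 1 => fun y => cos (y 1) / sin (y 1)
  | _, _, _ => fun _ => 0

section WarpedSphere

variable {F F' : ℝ → ℝ} {x : Fin 3 → ℝ}

theorem warpedSphereCoeff_ne_zero (hx₀ : F (x 0) ≠ 0) (hx₁ : sin (x 1) ≠ 0) (k : Fin 3) :
    warpedSphereCoeff F x k ≠ 0 := by
  fin_cases k <;> simp [warpedSphereCoeff, hx₀, hx₁]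

theorem christoffel_warpedSphereMetric (hF : ∀ r, HasDerivAt F (F' r) r) (hx₀ : F (x 0) ≠ 0)
    (hx₁ : sin (x 1) ≠ 0) (k i j : Fin 3) :
    christoffel (warpedSphereMetric F) k i j x = warpedSphereChristoffel F F' k i j x := by
  have hr := hF (x 0)
  have hθ := hasDerivAt_sin_sq (x 1)
  have hprod (d : Fin 3) : pd (fun y => F (y 0) * sin (y 1) ^ 2) d x
      = (if d = 0 then F' (x 0) else 0) * sin (x 1) ^ 2
        + F (x 0) * (if d = 1 then 2 * sin (x 1) * cos (x 1) else 0) := by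
    rw [pd_mul hr.hasFDerivAt_comp_apply.differentiableAt
      hθ.hasFDerivAt_comp_apply.differentiableAt, pd_comp_apply hr, pd_comp_apply hθ]
  rw [christoffel_diagonal (g := warpedSphereMetric F) (fun _ => rfl)
    (warpedSphereCoeff_ne_zero hx₀ hx₁)]
  fin_cases k <;> fin_cases i <;> fin_cases j <;>
    simp [warpedSphereCoeff, warpedSphereChristoffel, pd_const, pd_comp_apply hr, hprod] <;>
    field_simp

theorem pd_christoffel_warpedSphereMetric (hF : ∀ r, HasDerivAt F (F' r) r)
    (hx₀ : F (x 0) ≠ 0) (hx₁ : sin (x 1) ≠ 0) (k i j d : Fin 3) :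
    pd (christoffel (warpedSphereMetric F) k i j) d x
      = pd (warpedSphereChristoffel F F' k i j) d x := by
  have hFc : Continuous F := continuous_iff_continuousAt.2 fun r => (hF r).continuousAt
  have hopen : IsOpen {y : Fin 3 → ℝ | F (y 0) ≠ 0 ∧ sin (y 1) ≠ 0} :=
    (isOpen_ne_fun (hFc.comp (continuous_apply 0)) continuous_const).inter
      (isOpen_ne_fun (continuous_sin.comp (continuous_apply 1)) continuous_const)
  refine Filter.EventuallyEq.pd_eq ?_ d
  filter_upwards [hopen.mem_nhds ⟨hx₀, hx₁⟩] with y hy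
  exact christoffel_warpedSphereMetric hF hy.1 hy.2 k i j

theorem ricci_warpedSphereMetric_zero_zero (hF : ∀ r, HasDerivAt F (F' r) r) {F'' : ℝ}
    (hF' : HasDerivAt F' F'' (x 0)) (hx₀ : F (x 0) ≠ 0) (hx₁ : sin (x 1) ≠ 0) :
    ricci (warpedSphereMetric F) 0 0 x = -F'' / F (x 0) + F' (x 0) ^ 2 / (2 * F (x 0) ^ 2) := by
  have hq : HasDerivAt (fun r => F' r / (2 * F r))
      ((F'' * (2 * F (x 0)) - F' (x 0) * (2 * F' (x 0))) / (2 * F (x 0)) ^ 2) (x 0) :=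
    hF'.div ((hF (x 0)).const_mul 2) (mul_ne_zero two_ne_zero hx₀)
  simp only [ricci, Fin.sum_univ_three, pd_christoffel_warpedSphereMetric hF hx₀ hx₁,
    christoffel_warpedSphereMetric hF hx₀ hx₁, warpedSphereChristoffel, pd_const,
    pd_comp_apply hq, ↓reduceIte]
  field_simp
  ring

theorem ricci_warpedSphereMetric_one_one (hF : ∀ r, HasDerivAt F (F' r) r) {F'' : ℝ}
    (hF' : HasDerivAt F' F'' (x 0)) (hx₀ : F (x 0) ≠ 0) (hx₁ : sin (x 1) ≠ 0) :
    ricci (warpedSphereMetric F) 1 1 x = 1 - F'' / 2 := by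
  have hA : HasDerivAt (fun r => -F' r / 2) (-F'' / 2) (x 0) := hF'.neg.div_const 2
  have hcot : HasDerivAt (fun t => cos t / sin t)
      ((-sin (x 1) * sin (x 1) - cos (x 1) * cos (x 1)) / sin (x 1) ^ 2) (x 1) :=
    (hasDerivAt_cos (x 1)).div (hasDerivAt_sin (x 1)) hx₁
  simp only [ricci, Fin.sum_univ_three, pd_christoffel_warpedSphereMetric hF hx₀ hx₁,
    christoffel_warpedSphereMetric hF hx₀ hx₁, warpedSphereChristoffel, pd_const,
    pd_comp_apply hA, pd_comp_apply hcot, ↓reduceIte]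
  field_simp
  ring

theorem ricci_warpedSphereMetric_two_two (hF : ∀ r, HasDerivAt F (F' r) r) {F'' : ℝ}
    (hF' : HasDerivAt F' F'' (x 0)) (hx₀ : F (x 0) ≠ 0) (hx₁ : sin (x 1) ≠ 0) :
    ricci (warpedSphereMetric F) 2 2 x = sin (x 1) ^ 2 * (1 - F'' / 2) := by
  have hA : HasDerivAt (fun r => -F' r / 2) (-F'' / 2) (x 0) := hF'.neg.div_const 2
  have hθ := hasDerivAt_sin_sq (x 1)
  have hsc : HasDerivAt (fun t => -(sin t * cos t))
      (-(cos (x 1) * cos (x 1) + sin (x 1) * -sin (x 1))) (x 1) :=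
    ((hasDerivAt_sin (x 1)).mul (hasDerivAt_cos (x 1))).neg
  simp only [ricci, Fin.sum_univ_three, pd_christoffel_warpedSphereMetric hF hx₀ hx₁,
    christoffel_warpedSphereMetric hF hx₀ hx₁, warpedSphereChristoffel, pd_const,
    pd_mul hA.hasFDerivAt_comp_apply.differentiableAt hθ.hasFDerivAt_comp_apply.differentiableAt,
    pd_comp_apply hA, pd_comp_apply hθ, pd_comp_apply hsc, Fin.reduceEq, ↓reduceIte]
  field_simp
  ring

theorem scalarCurvature_warpedSphereMetric (hF : ∀ r, HasDerivAt F (F' r) r) {F'' : ℝ}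
    (hF' : HasDerivAt F' F'' (x 0)) (hx₀ : F (x 0) ≠ 0) (hx₁ : sin (x 1) ≠ 0) :
    scalarCurvature (warpedSphereMetric F) x
      = 2 / F (x 0) - 2 * F'' / F (x 0) + F' (x 0) ^ 2 / (2 * F (x 0) ^ 2) := by
  rw [scalarCurvature_diagonal (g := warpedSphereMetric F) (fun _ => rfl)
      (warpedSphereCoeff_ne_zero hx₀ hx₁), Fin.sum_univ_three,
    ricci_warpedSphereMetric_zero_zero hF hF' hx₀ hx₁,
    ricci_warpedSphereMetric_one_one hF hF' hx₀ hx₁,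
    ricci_warpedSphereMetric_two_two hF hF' hx₀ hx₁]
  simp only [warpedSphereCoeff, cons_val_zero, cons_val_one, cons_val]
  field_simp
  ring

end WarpedSphere

theorem hasDerivAt_sq_div_one_add_sq (r : ℝ) :
    HasDerivAt (fun r => r ^ 2 / (1 + r ^ 2)) (2 * r / (1 + r ^ 2) ^ 2) r := by
  have h := (hasDerivAt_pow 2 r).fun_div ((hasDerivAt_pow 2 r).const_add 1) (by positivity)
  refine h.congr_deriv ?_
  field_simp
  ring

theorem hasDerivAt_two_mul_div_one_add_sq_sq (r : ℝ) :
    HasDerivAt (fun r => 2 * r / (1 + r ^ 2) ^ 2) ((2 - 6 * r ^ 2) / (1 + r ^ 2) ^ 3) r := by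
  have h := ((hasDerivAt_id' r).const_mul 2).fun_div
    (((hasDerivAt_pow 2 r).const_add 1).fun_pow 2) (by positivity)
  refine h.congr_deriv ?_
  field_simp
  ring

/-- The non-abelian T-dual metric of the round `S³` has scalar curvature
`R = 2(r⁴ + 3r² + 9)/(1 + r²)²`, which is strictly positive for all `r`. -/
theorem natdS3_scalar_curvature :
    (∀ x : Fin 3 → ℝ, 0 < x 0 → x 1 ∈ Set.Ioo (0 : ℝ) Real.pi →
      scalarCurvature natdS3 x
        = 2 * ((x 0) ^ 4 + 3 * (x 0) ^ 2 + 9) / (1 + (x 0) ^ 2) ^ 2) ∧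
    ∀ r : ℝ, 0 < 2 * (r ^ 4 + 3 * r ^ 2 + 9) / (1 + r ^ 2) ^ 2 := by
  refine ⟨fun x hr hθ => ?_, fun r => by positivity⟩
  have hx₀ : x 0 ^ 2 / (1 + x 0 ^ 2) ≠ 0 := by positivity
  have hx₁ : sin (x 1) ≠ 0 := (sin_pos_of_pos_of_lt_pi hθ.1 hθ.2).ne'
  have hR := scalarCurvature_warpedSphereMetric hasDerivAt_sq_div_one_add_sq
    (hasDerivAt_two_mul_div_one_add_sq_sq (x 0)) hx₀ hx₁
  rw [show natdS3 = warpedSphereMetric (fun r => r ^ 2 / (1 + r ^ 2)) from rfl, hR]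
  field_simp
  ring
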